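/- arXiv:2309.02047 — 5 statements merged into one kernel-verified Lean document; each statement's English description precedes it below -/
import Mathlib

section
/- For every real s ≥ 0, the minimal weighted deviations tend to the theoretical lower bound: lim_{n→∞} m(n,s) = 1. -/
open Polynomial Filter

/-- The weighted sup of `|z-1|^s * |P(z)|` over the unit circle. -/
noncomputable def circleSup (s : ℝ) (P : Polynomial ℂ) : ℝ :=
  sSup {r : ℝ | ∃ z : ℂ, ‖z‖ = 1 ∧ r = ‖z - 1‖ ^ s * ‖P.eval z‖}

/-- Minimal weighted deviation over monic polynomials of degree `n` (free zeros). -/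
noncomputable def mFree (n : ℕ) (s : ℝ) : ℝ :=
  sInf {r : ℝ | ∃ P : Polynomial ℂ, P.Monic ∧ P.natDegree = n ∧ r = circleSup s P}

/-- Minimal weighted deviation over monic polynomials of degree `n` with all
roots on the unit circle. -/
noncomputable def mCircle (n : ℕ) (s : ℝ) : ℝ :=
  sInf {r : ℝ | ∃ P : Polynomial ℂ, P.Monic ∧ P.natDegree = n ∧
      (∀ z ∈ P.roots, ‖z‖ = 1) ∧ r = circleSup s P}

/-!
Lower bound: by the maximum modulus principle applied to the reversed polynomial, a monic `Q`
has `‖Q z‖ ≥ 1` somewhere on the unit circle. For `Q = (X - 1) ^ p * P ^ q` with `p ≈ s q` this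
gives `circleSup s P ^ q ≥ 1 / 2` for every `q`, hence `circleSup s P ≥ 1`.

Upper bound: on the unit circle `‖w - 1‖ ≤ ‖ρ - w‖` for `ρ > 1`, so `(1 - w / ρ) ^ (-s)`, which is
holomorphic on a disc of radius `ρ` and equals `1` at `0`, compensates the weight `‖w - 1‖ ^ s` up
to the factor `ρ ^ s`. Reversing a Taylor polynomial of it gives a monic polynomial with weighted
sup close to `ρ ^ s`, and multiplying by a power of `X` raises its degree without changing that sup.
-/

open scoped NNReal Topology

namespace Polynomial

theorem norm_eval_reverse_of_norm_eq_one {𝕜 : Type*} [NormedField 𝕜] (P : 𝕜[X]) {z : 𝕜} (hz : ‖z‖ = 1) :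
    ‖P.reverse.eval z‖ = ‖P.eval z⁻¹‖ := by
  have hz0 : z⁻¹ ≠ 0 := inv_ne_zero (norm_ne_zero_iff.1 (by rw [hz]; exact one_ne_zero))
  let := invertibleOfNonzero hz0
  have h := eval₂_reverse_mul_pow (RingHom.id 𝕜) z⁻¹ P
  rw [invOf_eq_inv, inv_inv] at h
  rw [← eval, ← eval] at h
  rw [← h, norm_mul, norm_pow, norm_inv, hz, inv_one, one_pow, mul_one]

theorem exists_norm_leadingCoeff_le_norm_eval (P : ℂ[X]) :
    ∃ z : ℂ, ‖z‖ = 1 ∧ ‖P.leadingCoeff‖ ≤ ‖P.eval z‖ := by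
  obtain ⟨w, hw, hmax⟩ := Complex.exists_mem_frontier_isMaxOn_norm Metric.isBounded_ball
    ⟨0, Metric.mem_ball_self one_pos⟩ P.reverse.differentiable.diffContOnCl
  rw [frontier_ball 0 one_ne_zero, mem_sphere_zero_iff_norm] at hw
  have h0 : ‖P.reverse.eval 0‖ ≤ ‖P.reverse.eval w‖ :=
    hmax (subset_closure (Metric.mem_ball_self one_pos))
  refine ⟨w⁻¹, by rw [norm_inv, hw, inv_one], ?_⟩
  rwa [norm_eval_reverse_of_norm_eq_one P hw, ← coeff_zero_eq_eval_zero, coeff_zero_reverse]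
    at h0

theorem monic_reverse_of_coeff_zero_eq_one {R : Type*} [Semiring R] [Nontrivial R] {P : R[X]}
    (h : P.coeff 0 = 1) : P.reverse.Monic := by
  rw [Monic, reverse_leadingCoeff, trailingCoeff_eq_coeff_zero (by rw [h]; exact one_ne_zero), h]

end Polynomial

section CircleSup

variable {s : ℝ}

theorem bddAbove_circleSup_set (hs : 0 ≤ s) (P : ℂ[X]) :
    BddAbove {r : ℝ | ∃ z : ℂ, ‖z‖ = 1 ∧ r = ‖z - 1‖ ^ s * ‖P.eval z‖} := by
  have hcont : Continuous fun z : ℂ => ‖z - 1‖ ^ s * ‖P.eval z‖ :=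
    ((Real.continuous_rpow_const hs).comp (by fun_prop)).mul (by fun_prop)
  refine ((isCompact_sphere (0 : ℂ) 1).bddAbove_image hcont.continuousOn).mono ?_
  rintro r ⟨z, hz, rfl⟩
  exact ⟨z, mem_sphere_zero_iff_norm.2 hz, rfl⟩

theorem le_circleSup (hs : 0 ≤ s) (P : ℂ[X]) {z : ℂ} (hz : ‖z‖ = 1) :
    ‖z - 1‖ ^ s * ‖P.eval z‖ ≤ circleSup s P :=
  le_csSup (bddAbove_circleSup_set hs P) ⟨z, hz, rfl⟩

theorem circleSup_le (P : ℂ[X]) {B : ℝ}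
    (hB : ∀ z : ℂ, ‖z‖ = 1 → ‖z - 1‖ ^ s * ‖P.eval z‖ ≤ B) : circleSup s P ≤ B :=
  csSup_le ⟨_, 1, norm_one, rfl⟩ (by rintro r ⟨z, hz, rfl⟩; exact hB z hz)

theorem circleSup_nonneg (P : ℂ[X]) : 0 ≤ circleSup s P :=
  Real.sSup_nonneg (by rintro r ⟨z, -, rfl⟩; positivity)

theorem circleSup_congr {P Q : ℂ[X]} (h : ∀ z : ℂ, ‖z‖ = 1 → ‖P.eval z‖ = ‖Q.eval z‖) :
    circleSup s P = circleSup s Q := by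
  unfold circleSup
  congr 1
  ext r
  exact exists_congr fun z => and_congr_right fun hz => by rw [h z hz]

theorem circleSup_X_pow_mul (P : ℂ[X]) (m : ℕ) : circleSup s (X ^ m * P) = circleSup s P :=
  circleSup_congr fun z hz => by rw [eval_mul, eval_pow, eval_X, norm_mul, norm_pow, hz, one_pow,
    one_mul]

theorem circleSup_reverse_le (hs : 0 ≤ s) (P : ℂ[X]) : circleSup s P.reverse ≤ circleSup s P := by
  refine circleSup_le _ fun z hz => ?_
  have hz' : ‖z⁻¹‖ = 1 := by rw [norm_inv, hz, inv_one]
  have hz0 : z ≠ 0 := norm_ne_zero_iff.1 (by rw [hz]; exact one_ne_zero)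
  have hsub : ‖z - 1‖ = ‖z⁻¹ - 1‖ := by
    rw [show z⁻¹ - 1 = z⁻¹ * (1 - z) by field_simp, norm_mul, hz', one_mul, norm_sub_rev]
  rw [P.norm_eval_reverse_of_norm_eq_one hz, hsub]
  exact le_circleSup hs P hz'

end CircleSup

section LowerBound

variable {s : ℝ}

/-- Take `Q = (X - 1) ^ p * P ^ q` with `s q < p ≤ s q + 1`: since `‖z - 1‖ ≤ 2`, trading
`‖z - 1‖ ^ p` for `‖z - 1‖ ^ (s q)` costs at most a factor `2`. -/
theorem half_le_circleSup_pow (hs : 0 ≤ s) {P : ℂ[X]} (hP : P.Monic) (q : ℕ) :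
    1 / 2 ≤ circleSup s P ^ q := by
  set p := ⌊s * q⌋₊ + 1
  have hp : s * q < p := by exact_mod_cast Nat.lt_floor_add_one (s * q)
  have hp' : (p : ℝ) ≤ s * q + 1 := by
    have := Nat.floor_le (mul_nonneg hs q.cast_nonneg)
    push_cast [p]
    linarith
  obtain ⟨z, hz, hQ⟩ := ((X - C 1) ^ p * P ^ q).exists_norm_leadingCoeff_le_norm_eval
  rw [(((monic_X_sub_C 1).pow p).mul (hP.pow q)).leadingCoeff, norm_one, eval_mul, eval_pow,
    eval_pow, eval_sub, eval_X, eval_C, norm_mul, norm_pow, norm_pow] at hQ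
  set t := ‖z - 1‖
  set A := ‖P.eval z‖
  have ht2 : t ≤ 2 := (norm_sub_le _ _).trans (by rw [hz, norm_one]; norm_num)
  have htp : t ^ p ≤ 2 * t ^ (s * q) := calc
    t ^ p = t ^ (s * q) * t ^ ((p : ℝ) - s * q) := by
      have hp0 : s * q + ((p : ℝ) - s * q) ≠ 0 := by
        rw [add_sub_cancel]; exact Nat.cast_ne_zero.2 (Nat.succ_ne_zero _)
      rw [← Real.rpow_add' (norm_nonneg _) hp0, add_sub_cancel, Real.rpow_natCast]
    _ ≤ t ^ (s * q) * 2 ^ (1 : ℝ) := by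
      gcongr
      exact (Real.rpow_le_rpow (norm_nonneg _) ht2 (by linarith)).trans
        (Real.rpow_le_rpow_of_exponent_le one_le_two (by linarith))
    _ = 2 * t ^ (s * q) := by rw [Real.rpow_one, mul_comm]
  calc 1 / 2 ≤ (t ^ s * A) ^ q := by
        rw [mul_pow, ← Real.rpow_mul_natCast (norm_nonneg _)]
        nlinarith [pow_nonneg (norm_nonneg (P.eval z)) q]
    _ ≤ circleSup s P ^ q := by
        gcongr
        exact le_circleSup hs P hz

theorem one_le_circleSup (hs : 0 ≤ s) {P : ℂ[X]} (hP : P.Monic) : 1 ≤ circleSup s P := by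
  by_contra! hlt
  obtain ⟨q, hq⟩ := ((tendsto_pow_atTop_nhds_zero_of_lt_one (circleSup_nonneg P) hlt).eventually
    (gt_mem_nhds (one_half_pos (α := ℝ)))).exists
  exact not_lt.2 (half_le_circleSup_pow hs hP q) hq

theorem one_le_mFree (hs : 0 ≤ s) (n : ℕ) : 1 ≤ mFree n s :=
  le_csInf ⟨_, X ^ n, monic_X_pow n, natDegree_X_pow n, rfl⟩
    (by rintro r ⟨P, hP, -, rfl⟩; exact one_le_circleSup hs hP)

end LowerBound

/-- `S` is a long enough partial sum of the Taylor series of `f` at `0`. -/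
theorem Complex.exists_polynomial_approx {f : ℂ → ℂ} {r R : ℝ≥0} (hrR : r < R)
    (hf : DifferentiableOn ℂ f (Metric.ball 0 R)) {ε : ℝ} (hε : 0 < ε) :
    ∃ S : ℂ[X], S.coeff 0 = f 0 ∧ ∀ w : ℂ, ‖w‖ ≤ r → ‖f w - S.eval w‖ < ε := by
  obtain ⟨R', hrR', hR'R⟩ := exists_between hrR
  obtain ⟨r', hrr', hr'R'⟩ := exists_between hrR'
  have hps := (hf.mono (Metric.closedBall_subset_ball hR'R)).hasFPowerSeriesOnBall
    (pos_of_gt hrR')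
  set p := cauchyPowerSeries f 0 R'
  obtain ⟨K, hK, hK1⟩ := ((Metric.tendstoUniformlyOn_iff.1
    (hps.tendstoUniformlyOn (ENNReal.coe_lt_coe.2 hr'R')) ε hε).and (eventually_gt_atTop 0)).exists
  refine ⟨∑ i ∈ Finset.range K, C (p.coeff i) * X ^ i, ?_, fun w hw => ?_⟩
  · simp only [finsetSum_coeff, coeff_C_mul_X_pow, Finset.sum_ite_eq, Finset.mem_range]
    rw [if_pos hK1]
    exact hps.coeff_zero 1
  · have hS : (∑ i ∈ Finset.range K, C (p.coeff i) * X ^ i).eval w = p.partialSum K w := by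
      rw [eval_finsetSum, FormalMultilinearSeries.partialSum]
      refine Finset.sum_congr rfl fun i _ => ?_
      rw [FormalMultilinearSeries.apply_eq_pow_smul_coeff, smul_eq_mul, eval_mul, eval_C,
        eval_pow, eval_X, mul_comm]
    have hwr : w ∈ Metric.ball (0 : ℂ) r' := mem_ball_zero_iff.2 (hw.trans_lt hrr')
    simpa [hS, dist_eq_norm] using hK w hwr

theorem Complex.norm_sub_one_le_norm_ofReal_sub {w : ℂ} (hw : ‖w‖ = 1) {ρ : ℝ} (hρ : 1 ≤ ρ) :
    ‖w - 1‖ ≤ ‖(ρ : ℂ) - w‖ := by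
  have hw2 : w.re * w.re + w.im * w.im = 1 := by
    rw [← Complex.normSq_apply, ← Complex.sq_norm, hw, one_pow]
  have hre : w.re ≤ 1 := hw ▸ Complex.re_le_norm w
  rw [← sq_le_sq₀ (norm_nonneg _) (norm_nonneg _), Complex.sq_norm, Complex.sq_norm,
    Complex.normSq_apply, Complex.normSq_apply]
  simp only [Complex.sub_re, Complex.sub_im, Complex.ofReal_re, Complex.ofReal_im, Complex.one_re,
    Complex.one_im]
  nlinarith

theorem differentiableOn_one_sub_div_cpow {ρ : ℝ} (hρ : 0 < ρ) (a : ℂ) :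
    DifferentiableOn ℂ (fun w : ℂ => (1 - w / ρ) ^ a) (Metric.ball 0 ρ) := by
  intro w hw
  refine (DifferentiableAt.cpow_const (by fun_prop) ?_).differentiableWithinAt
  rw [sub_eq_add_neg]
  refine Complex.mem_slitPlane_of_norm_lt_one ?_
  rw [norm_neg, norm_div, Complex.norm_real, Real.norm_of_nonneg hρ.le, div_lt_one hρ]
  exact mem_ball_zero_iff.1 hw

theorem norm_sub_one_rpow_mul_norm_one_sub_div_cpow_le {s : ℝ} (hs : 0 ≤ s) {ρ : ℝ} (hρ : 1 < ρ)
    {w : ℂ} (hw : ‖w‖ = 1) : ‖w - 1‖ ^ s * ‖(1 - w / ρ) ^ ((-s : ℝ) : ℂ)‖ ≤ ρ ^ s := by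
  have hρ0 : (ρ : ℂ) ≠ 0 := Complex.ofReal_ne_zero.2 (by positivity)
  set u := ‖1 - w / ρ‖
  have hρu : ρ * u = ‖(ρ : ℂ) - w‖ := by
    rw [show (ρ : ℂ) - w = ρ * (1 - w / ρ) by field_simp, norm_mul, Complex.norm_real,
      Real.norm_of_nonneg (by positivity)]
  have hu : 0 < u := by
    have : ‖w / ρ‖ < 1 := by
      rw [norm_div, Complex.norm_real, hw, Real.norm_of_nonneg (by positivity)]
      exact (div_lt_one (by positivity)).2 hρ
    linarith [norm_sub_norm_le (1 : ℂ) (w / ρ), norm_one (α := ℂ)]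
  calc ‖w - 1‖ ^ s * ‖(1 - w / ρ) ^ ((-s : ℝ) : ℂ)‖ ≤ (ρ * u) ^ s * u ^ (-s) := by
        rw [Complex.norm_cpow_real]
        gcongr
        rw [hρu]
        exact Complex.norm_sub_one_le_norm_ofReal_sub hw hρ.le
    _ = ρ ^ s := by
        rw [Real.mul_rpow (by positivity) hu.le, mul_assoc, ← Real.rpow_add hu, add_neg_cancel,
          Real.rpow_zero, mul_one]

section UpperBound

variable {s : ℝ}

theorem exists_monic_circleSup_lt (hs : 0 ≤ s) {b : ℝ} (hb : 1 < b) :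
    ∃ P : ℂ[X], P.Monic ∧ circleSup s P < b := by
  obtain ⟨ρ, hρb, hρ1⟩ : ∃ ρ : ℝ≥0, (ρ : ℝ) ^ s < b ∧ 1 < ρ := by
    have hlim : Tendsto (fun ρ : ℝ≥0 => (ρ : ℝ) ^ s) (𝓝[>] 1) (𝓝 1) := by
      refine tendsto_nhdsWithin_of_tendsto_nhds ?_
      exact ((Real.continuous_rpow_const hs).comp NNReal.continuous_coe).tendsto' 1 1 (by simp)
    exact ((hlim.eventually (gt_mem_nhds hb)).and self_mem_nhdsWithin).exists
  have h2s : (0 : ℝ) < 2 ^ s := by positivity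
  set ε := (b - ρ ^ s) / (2 * 2 ^ s)
  have hε : 0 < ε := div_pos (by linarith) (by positivity)
  obtain ⟨S, hS0, hS⟩ := Complex.exists_polynomial_approx hρ1
    (differentiableOn_one_sub_div_cpow (ρ := ρ) (by positivity) ((-s : ℝ) : ℂ)) hε
  rw [zero_div, sub_zero, Complex.one_cpow] at hS0
  refine ⟨S.reverse, monic_reverse_of_coeff_zero_eq_one hS0, (circleSup_reverse_le hs S).trans_lt ?_⟩
  calc circleSup s S ≤ ρ ^ s + 2 ^ s * ε := circleSup_le S fun w hw => ?_
    _ < b := by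
      rw [mul_div_assoc', mul_comm 2, mul_div_mul_left _ _ h2s.ne']
      linarith
  set F := (1 - w / ((ρ : ℝ) : ℂ)) ^ ((-s : ℝ) : ℂ)
  have hw1 : ‖w - 1‖ ^ s ≤ 2 ^ s :=
    Real.rpow_le_rpow (norm_nonneg _) ((norm_sub_le _ _).trans (by rw [hw, norm_one]; norm_num)) hs
  calc ‖w - 1‖ ^ s * ‖S.eval w‖ ≤ ‖w - 1‖ ^ s * ‖F‖ + ‖w - 1‖ ^ s * ‖F - S.eval w‖ := by
        rw [← mul_add]
        gcongr
        exact norm_le_norm_add_norm_sub _ _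
    _ ≤ ρ ^ s + 2 ^ s * ε := by
        gcongr
        · exact norm_sub_one_rpow_mul_norm_one_sub_div_cpow_le hs hρ1 hw
        · exact (hS w (by rw [hw, NNReal.coe_one])).le

theorem mFree_le_circleSup {P : ℂ[X]} (hP : P.Monic) {n : ℕ} (hn : P.natDegree ≤ n) :
    mFree n s ≤ circleSup s P := by
  have hQ : (X ^ (n - P.natDegree) * P).Monic := (monic_X_pow _).mul hP
  refine (circleSup_X_pow_mul P (n - P.natDegree)) ▸ csInf_le ⟨0, ?_⟩ ⟨_, hQ, ?_, rfl⟩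
  · rintro r ⟨Q, -, -, rfl⟩
    exact circleSup_nonneg Q
  · rw [(monic_X_pow _).natDegree_mul hP, natDegree_X_pow, Nat.sub_add_cancel hn]

end UpperBound

theorem mFree_tendsto_one (s : ℝ) (hs : 0 ≤ s) :
    Filter.Tendsto (fun n : ℕ => mFree n s) Filter.atTop (nhds 1) := by
  refine tendsto_order.2 ⟨fun a ha => .of_forall fun n => ha.trans_le (one_le_mFree hs n),
    fun b hb => ?_⟩
  obtain ⟨P, hP, hPb⟩ := exists_monic_circleSup_lt hs hb
  filter_upwards [eventually_ge_atTop P.natDegree] with n hn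
  exact (mFree_le_circleSup hP hn).trans_lt hPb
end

section
/- Let N ≥ 1, let a₁,…,a_N ∈ ℂ with |a_k| ≤ 1, and let s₁,…,s_N be reals with s_k ≥ 1. Then for every z on the unit circle with z ≠ a_k for all k: Re( Σ_{k=1}^N s_k·z/(z−a_k) ) ≥ (Σ_{k=1}^N s_k)/2; in particular |Σ_{k=1}^N s_k/(z−a_k)| ≥ (Σ_{k=1}^N s_k)/2, so that Π_k |z−a_k|^{s_k} · |Σ_k s_k/(z−a_k)| ≥ ((Σ_k s_k)/2) · Π_k |z−a_k|^{s_k}. -/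
/-! When `‖a‖ ≤ ‖z‖`, the point `z / (z - a)` lies in the half-plane `Re w ≥ 1/2`; summing these
with nonnegative weights bounds the real part, and multiplying by `z` with `‖z‖ = 1` does not change
the modulus of `∑ s_k / (z - a_k)`. -/

open Finset

theorem Complex.two_mul_re_div_sub_sub_one {z a : ℂ} (hne : z ≠ a) :
    2 * (z / (z - a)).re - 1 = (‖z‖ ^ 2 - ‖a‖ ^ 2) / ‖z - a‖ ^ 2 := by
  have hd : Complex.normSq (z - a) ≠ 0 := Complex.normSq_eq_zero.not.mpr (sub_ne_zero.mpr hne)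
  rw [Complex.div_re, ← add_div, ← Complex.normSq_eq_norm_sq, ← Complex.normSq_eq_norm_sq,
    ← Complex.normSq_eq_norm_sq]
  field_simp
  simp only [Complex.normSq_apply, Complex.sub_re, Complex.sub_im]
  ring

theorem Complex.one_half_le_re_div_sub {z a : ℂ} (ha : ‖a‖ ≤ ‖z‖) (hne : z ≠ a) :
    1 / 2 ≤ (z / (z - a)).re := by
  have key : 0 ≤ 2 * (z / (z - a)).re - 1 := by
    rw [Complex.two_mul_re_div_sub_sub_one hne]
    have := pow_le_pow_left₀ (norm_nonneg a) ha 2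
    exact div_nonneg (sub_nonneg.mpr this) (by positivity)
  linarith

theorem sum_div_two_le_re_sum_mul_div_sub {ι : Type*} (t : Finset ι) {w : ι → ℝ} {a : ι → ℂ}
    {z : ℂ} (hw : ∀ i ∈ t, 0 ≤ w i) (ha : ∀ i ∈ t, ‖a i‖ ≤ ‖z‖) (hza : ∀ i ∈ t, z ≠ a i) :
    (∑ i ∈ t, w i) / 2 ≤ (∑ i ∈ t, (w i : ℂ) * z / (z - a i)).re := by
  rw [Complex.re_sum, sum_div]
  refine sum_le_sum fun i hi => ?_
  rw [mul_div_assoc, Complex.re_ofReal_mul, div_eq_mul_one_div]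
  exact mul_le_mul_of_nonneg_left (Complex.one_half_le_re_div_sub (ha i hi) (hza i hi)) (hw i hi)

theorem turan_lower_bound_powers_general (N : ℕ) (a : Fin N → ℂ)
    (ha : ∀ k, ‖a k‖ ≤ 1) (s : Fin N → ℝ) (hs : ∀ k, 1 ≤ s k)
    (z : ℂ) (hz : ‖z‖ = 1) (hza : ∀ k, z ≠ a k) :
    (∑ k, s k) / 2 ≤ (∑ k, (s k : ℂ) * z / (z - a k)).re ∧
    (∑ k, s k) / 2 ≤ ‖∑ k, (s k : ℂ) / (z - a k)‖ ∧
    ((∑ k, s k) / 2) * ∏ k, ‖z - a k‖ ^ s k ≤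
      (∏ k, ‖z - a k‖ ^ s k) * ‖∑ k, (s k : ℂ) / (z - a k)‖ := by
  have hre : (∑ k, s k) / 2 ≤ (∑ k, (s k : ℂ) * z / (z - a k)).re :=
    sum_div_two_le_re_sum_mul_div_sub univ (fun k _ => zero_le_one.trans (hs k))
      (fun k _ => hz ▸ ha k) (fun k _ => hza k)
  have hnorm : (∑ k, s k) / 2 ≤ ‖∑ k, (s k : ℂ) / (z - a k)‖ :=
    calc (∑ k, s k) / 2 ≤ (∑ k, (s k : ℂ) * z / (z - a k)).re := hre
      _ ≤ ‖∑ k, (s k : ℂ) * z / (z - a k)‖ := Complex.re_le_norm _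
      _ = ‖z * ∑ k, (s k : ℂ) / (z - a k)‖ := by
        rw [mul_sum]; congr 1; exact sum_congr rfl fun k _ => by ring
      _ = ‖∑ k, (s k : ℂ) / (z - a k)‖ := by rw [norm_mul, hz, one_mul]
  refine ⟨hre, hnorm, ?_⟩
  rw [mul_comm]
  exact mul_le_mul_of_nonneg_left hnorm (prod_nonneg fun k _ => by positivity)

theorem turan_lower_bound_powers (N : ℕ) (hN : 1 ≤ N) (a : Fin N → ℂ)
    (ha : ∀ k, ‖a k‖ ≤ 1) (s : Fin N → ℝ) (hs : ∀ k, 1 ≤ s k)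
    (z : ℂ) (hz : ‖z‖ = 1) (hza : ∀ k, z ≠ a k) :
    (∑ k, s k) / 2 ≤ (∑ k, (s k : ℂ) * z / (z - a k)).re ∧
    (∑ k, s k) / 2 ≤ ‖∑ k, (s k : ℂ) / (z - a k)‖ ∧
    ((∑ k, s k) / 2) * ∏ k, ‖z - a k‖ ^ s k ≤
      (∏ k, ‖z - a k‖ ^ s k) * ‖∑ k, (s k : ℂ) / (z - a k)‖ :=
  turan_lower_bound_powers_general N a ha s hs z hz hza
end

section
/- For every positive integer m, with E_m = {z ∈ ℂ : |z^m − 1| = 1}, the minimal sup-norms of monic polynomials on E_m tend to 1: writing t(n) = inf over all monic complex polynomials P of degree n of sup_{z ∈ E_m} |P(z)|, one has lim_{n→∞} t(n) = 1. -/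
/-!
Lower bound. If `|P| ≤ t` on `E_m` for a monic `P` of degree `n`, the monic `H` of degree `n` with
`|H(z^m)| = ∏ⱼ |P(ζʲ z)|` (`ζ` a primitive `m`-th root of unity) satisfies `|H| ≤ t^m` on the
circle `|w - 1| = 1`, the image of `E_m` under `z ↦ z^m`. The maximum principle, applied to the
reversal of `H(1 + ·)`, shows that a monic polynomial has sup norm at least `1` on the unit circle;
hence `t ≥ 1`.

Upper bound. Write `n = q m + r` with `r < m` and take `P(z) = z^r Q(z^m - 1)`. On `E_m`,
`w = z^m - 1` lies on the unit circle and `|z|^r = |1 + w|^(r/m)`, so it suffices to find monic `Q`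
of degree `q` with `|Q(w)| |1 + w|^(r/m) ≤ 1 + ε` on the unit circle. Reversing `Q`, this asks for
a polynomial `S` with `S(0) = 1` and `|S(u)| |1 + u|^α ≤ 1 + ε` there: a Taylor polynomial of
`(1 + β u)^(-α)` with `β < 1` close to `1` does it, because `β |1 + u| ≤ |1 + β u|` for `|u| = 1`.
-/

open Polynomial Filter Topology
open scoped NNReal

protected theorem Multiset.norm_prod {α : Type*} [SeminormedCommRing α] [NormMulClass α]
    [NormOneClass α] (s : Multiset α) : ‖s.prod‖ = (s.map norm).prod :=
  map_multiset_prod (normHom : α →*₀ ℝ) s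

theorem IsPrimitiveRoot.norm_pow_sub_pow_eq_prod {K : Type*} [NormedField K] {m : ℕ} {ζ : K}
    (hζ : IsPrimitiveRoot ζ m) (hm : m ≠ 0) (z ρ : K) :
    ‖z ^ m - ρ ^ m‖ = ∏ j ∈ Finset.range m, ‖ζ ^ j * z - ρ‖ := by
  have h := congrArg (eval ρ) (X_pow_sub_C_eq_prod hζ (Nat.pos_of_ne_zero hm) (α := z) rfl)
  simp only [eval_sub, eval_pow, eval_X, eval_C, eval_prod] at h
  rw [norm_sub_rev, h, norm_prod]
  simp_rw [norm_sub_rev ρ]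

namespace Polynomial

variable {K : Type*} [NormedField K]

theorem norm_eval_reflect {N : ℕ} {S : K[X]} (hS : S.natDegree ≤ N) {w : K} (hw : ‖w‖ = 1) :
    ‖(S.reflect N).eval w‖ = ‖S.eval w⁻¹‖ := by
  have hw0 : w⁻¹ ≠ 0 := inv_ne_zero (norm_ne_zero_iff.mp (by rw [hw]; exact one_ne_zero))
  let := invertibleOfNonzero hw0
  have h := eval₂_reflect_mul_pow (RingHom.id K) w⁻¹ N S hS
  rw [invOf_eq_inv, inv_inv, eval₂_id, eval₂_id] at h
  rw [← h, norm_mul, norm_pow, norm_inv, hw]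
  simp

theorem norm_leadingCoeff_le_of_forall_norm_eval_le {B : ℂ[X]} {M : ℝ}
    (h : ∀ z : ℂ, ‖z‖ = 1 → ‖B.eval z‖ ≤ M) : ‖B.leadingCoeff‖ ≤ M := by
  rw [← coeff_zero_reverse, coeff_zero_eq_eval_zero]
  refine Complex.norm_le_of_forall_mem_frontier_norm_le Metric.isBounded_ball
    B.reverse.differentiable.diffContOnCl (fun v hv => ?_)
    (subset_closure (Metric.mem_ball_self one_pos))
  rw [frontier_ball 0 one_ne_zero, mem_sphere_zero_iff_norm] at hv
  rw [reverse, norm_eval_reflect le_rfl hv]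
  exact h _ (by rw [norm_inv, hv, inv_one])

variable [IsAlgClosed K]

/-- The roots of `H` are the `m`-th powers of those of `P`. -/
theorem exists_monic_norm_eval_pow_eq_prod {m : ℕ} (hm : m ≠ 0) {ζ : K}
    (hζ : IsPrimitiveRoot ζ m) {P : K[X]} (hP : P.Monic) :
    ∃ H : K[X], H.Monic ∧
      ∀ z : K, ‖H.eval (z ^ m)‖ = ∏ j ∈ Finset.range m, ‖P.eval (ζ ^ j * z)‖ := by
  have hroots : ∀ x : K, ‖P.eval x‖ = (P.roots.map fun ρ => ‖x - ρ‖).prod := by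
    intro x
    conv_lhs => rw [← prod_multiset_X_sub_C_of_monic_of_roots_card_eq hP
      IsAlgClosed.card_roots_eq_natDegree]
    simp [eval_multiset_prod, Multiset.norm_prod, Multiset.map_map]
  refine ⟨(P.roots.map fun ρ => X - C (ρ ^ m)).prod,
    monic_multiset_prod_of_monic _ _ fun ρ _ => monic_X_sub_C _, fun z => ?_⟩
  simp_rw [hroots]
  calc _ = (P.roots.map fun ρ => ‖z ^ m - ρ ^ m‖).prod := by
        simp [eval_multiset_prod, Multiset.norm_prod, Multiset.map_map]
    _ = _ := by
        simp_rw [hζ.norm_pow_sub_pow_eq_prod hm]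
        exact Multiset.prod_map_prod_map _ _

end Polynomial

theorem one_le_of_forall_lemniscate_norm_eval_le {m : ℕ} (hm : m ≠ 0) {P : ℂ[X]} (hP : P.Monic)
    {t : ℝ} (h : ∀ z : ℂ, ‖z ^ m - 1‖ = 1 → ‖P.eval z‖ ≤ t) : 1 ≤ t := by
  have hζ := Complex.isPrimitiveRoot_exp m hm
  obtain ⟨H, hHm, hH⟩ := exists_monic_norm_eval_pow_eq_prod hm hζ hP
  have ht : 0 ≤ t := (norm_nonneg _).trans (h 0 (by simp [zero_pow hm]))
  have hbound : ∀ v : ℂ, ‖v‖ = 1 → ‖(H.comp (X + C 1)).eval v‖ ≤ t ^ m := by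
    intro v hv
    obtain ⟨z, hz⟩ := IsAlgClosed.exists_pow_nat_eq (v + 1) (Nat.pos_of_ne_zero hm)
    rw [eval_comp, eval_add, eval_X, eval_C, ← hz, hH]
    refine (Finset.prod_le_prod (fun _ _ => norm_nonneg _) fun j _ => h _ ?_).trans_eq (by simp)
    rw [mul_pow, ← pow_mul, mul_comm j, pow_mul, hζ.pow_eq_one,
      one_pow, one_mul, hz, add_sub_cancel_right, hv]
  have hlead := norm_leadingCoeff_le_of_forall_norm_eval_le hbound
  rwa [(hHm.comp (monic_X_add_C 1) (by rw [natDegree_X_add_C]; exact one_ne_zero)).leadingCoeff,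
    norm_one, one_le_pow_iff_of_nonneg ht hm] at hlead

theorem FormalMultilinearSeries.partialSum_eq_sum_pow_smul_coeff {𝕜 E : Type*}
    [NontriviallyNormedField 𝕜] [NormedAddCommGroup E] [NormedSpace 𝕜 E]
    (p : FormalMultilinearSeries 𝕜 𝕜 E) (n : ℕ) (u : 𝕜) :
    p.partialSum n u = ∑ k ∈ Finset.range n, u ^ k • p.coeff k :=
  Finset.sum_congr rfl fun _ _ => p.apply_eq_pow_smul_coeff

theorem DifferentiableOn.exists_polynomial_approx_on_closedBall_one {f : ℂ → ℂ} {R : ℝ≥0}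
    (hR : 1 < R) (hf : DifferentiableOn ℂ f (Metric.closedBall 0 R)) {δ : ℝ} (hδ : 0 < δ) :
    ∃ S : ℂ[X], S.eval 0 = f 0 ∧ ∀ u : ℂ, ‖u‖ ≤ 1 → ‖S.eval u - f u‖ < δ := by
  have hps := hf.hasFPowerSeriesOnBall (zero_lt_one.trans hR)
  set p := cauchyPowerSeries f 0 R
  obtain ⟨r, h1r, hrR⟩ := exists_between hR
  obtain ⟨N, hN⟩ := eventually_atTop.mp
    (Metric.tendstoUniformlyOn_iff.mp (hps.tendstoUniformlyOn (ENNReal.coe_lt_coe.2 hrR)) δ hδ)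
  have hS : ∀ u, (∑ k ∈ Finset.range (N + 1), C (p.coeff k) * X ^ k).eval u
      = p.partialSum (N + 1) u := fun u => by
    rw [eval_finsetSum, p.partialSum_eq_sum_pow_smul_coeff]
    simp only [eval_mul, eval_C, eval_pow, eval_X, smul_eq_mul, mul_comm]
  refine ⟨∑ k ∈ Finset.range (N + 1), C (p.coeff k) * X ^ k, ?_, fun u hu => ?_⟩
  · rw [hS, p.partialSum_eq_sum_pow_smul_coeff, Finset.sum_range_succ']
    simp only [ne_eq, Nat.add_one_ne_zero, not_false_eq_true, zero_pow, zero_smul,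
      Finset.sum_const_zero, pow_zero, one_smul, zero_add]
    exact hps.coeff_zero 1
  · rw [hS, ← dist_eq_norm, dist_comm]
    simpa using hN (N + 1) N.le_succ u
      (mem_ball_zero_iff.2 (hu.trans_lt (by exact_mod_cast h1r)))

theorem Complex.norm_le_norm_add_ofReal {a : ℂ} (ha : 0 ≤ a.re) {c : ℝ} (hc : 0 ≤ c) :
    ‖a‖ ≤ ‖a + c‖ := by
  rw [Complex.norm_def, Complex.norm_def]
  refine Real.sqrt_le_sqrt ?_
  simp only [Complex.normSq_apply, Complex.add_re, Complex.add_im, Complex.ofReal_re,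
    Complex.ofReal_im, add_zero]
  nlinarith

theorem mul_norm_one_add_le_norm_one_add_mul {u : ℂ} (hu : ‖u‖ = 1) {β : ℝ} (hβ0 : 0 ≤ β)
    (hβ1 : β ≤ 1) : β * ‖1 + u‖ ≤ ‖1 + β * u‖ := by
  have hre : 0 ≤ ((β : ℂ) * (1 + u)).re := by
    have := Complex.abs_re_le_norm u
    rw [hu, abs_le] at this
    simp only [Complex.re_ofReal_mul, Complex.add_re, Complex.one_re]
    nlinarith
  have h := Complex.norm_le_norm_add_ofReal hre (sub_nonneg.2 hβ1)
  rw [norm_mul, Complex.norm_real, Real.norm_of_nonneg hβ0] at h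
  convert h using 2
  push_cast
  ring

theorem norm_one_add_mul_cpow_neg_mul_rpow_le {u : ℂ} (hu : ‖u‖ = 1) {β : ℝ} (hβ0 : 0 < β)
    (hβ1 : β < 1) {α : ℝ} (hα0 : 0 ≤ α) (hα1 : α ≤ 1) :
    ‖(1 + β * u) ^ (-α : ℂ)‖ * ‖1 + u‖ ^ α ≤ β⁻¹ := by
  have hle := mul_norm_one_add_le_norm_one_add_mul hu hβ0.le hβ1.le
  have hpos : 0 < ‖1 + β * u‖ := norm_pos_iff.2 <| Complex.slitPlane_ne_zero <|
    Complex.mem_slitPlane_of_norm_lt_one (by rwa [norm_mul, hu, mul_one, Complex.norm_real,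
      Real.norm_of_nonneg hβ0.le])
  have hnorm : ‖1 + u‖ ≤ β⁻¹ * ‖1 + β * u‖ := by
    rw [inv_mul_eq_div, le_div_iff₀' hβ0]; exact hle
  calc ‖(1 + β * u) ^ (-α : ℂ)‖ * ‖1 + u‖ ^ α
      ≤ ‖1 + β * u‖ ^ (-α) * (β⁻¹ ^ α * ‖1 + β * u‖ ^ α) := by
        rw [← Complex.ofReal_neg, Complex.norm_cpow_real, ← Real.mul_rpow (by positivity)
          hpos.le]
        gcongr
    _ = β⁻¹ ^ α := by
        rw [Real.rpow_neg hpos.le, mul_left_comm, inv_mul_cancel₀ (by positivity), mul_one]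
    _ ≤ β⁻¹ := Real.rpow_le_self_of_one_le (one_le_inv₀ hβ0 |>.2 hβ1.le) hα1

theorem exists_polynomial_eval_zero_eq_one_norm_mul_rpow_le {α : ℝ} (hα0 : 0 ≤ α) (hα1 : α ≤ 1)
    {ε : ℝ} (hε : 0 < ε) :
    ∃ S : ℂ[X], S.eval 0 = 1 ∧ ∀ u : ℂ, ‖u‖ = 1 → ‖S.eval u‖ * ‖1 + u‖ ^ α ≤ 1 + ε := by
  set β : ℝ := (1 + ε / 2)⁻¹
  have hβ0 : 0 < β := by positivity
  have hβ1 : β < 1 := inv_lt_one_of_one_lt₀ (by linarith)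
  set R : ℝ≥0 := ⟨1 + ε / 4, by positivity⟩
  have hR : 1 < R := NNReal.coe_lt_coe.1 (show (1 : ℝ) < 1 + ε / 4 by linarith)
  have hf : DifferentiableOn ℂ (fun u : ℂ => (1 + β * u) ^ (-α : ℂ))
      (Metric.closedBall 0 R) := by
    intro u hu
    refine (((differentiableAt_id.const_mul _).const_add _).cpow_const
      (Complex.mem_slitPlane_of_norm_lt_one ?_)).differentiableWithinAt
    calc ‖(β : ℂ) * u‖ = β * ‖u‖ := by simp [abs_of_pos hβ0]
      _ ≤ β * (1 + ε / 4) := by gcongr; exact mem_closedBall_zero_iff.1 hu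
      _ < 1 := (inv_mul_lt_iff₀ (by positivity)).2 (by linarith)
  obtain ⟨S, hS0, hS⟩ :=
    hf.exists_polynomial_approx_on_closedBall_one hR (by positivity : 0 < ε / 4)
  refine ⟨S, by simpa using hS0, fun u hu => ?_⟩
  have happrox : ‖S.eval u‖ ≤ ‖(1 + β * u) ^ (-α : ℂ)‖ + ε / 4 := by
    have := norm_sub_norm_le (S.eval u) ((1 + β * u) ^ (-α : ℂ))
    linarith [hS u hu.le]
  have htwo : ‖1 + u‖ ^ α ≤ 2 := by
    have : ‖1 + u‖ ≤ 2 := (norm_add_le _ _).trans_eq (by rw [norm_one, hu]; norm_num)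
    exact (Real.rpow_le_rpow (norm_nonneg _) this hα0).trans
      (Real.rpow_le_self_of_one_le one_le_two hα1)
  calc ‖S.eval u‖ * ‖1 + u‖ ^ α
      ≤ ‖(1 + β * u) ^ (-α : ℂ)‖ * ‖1 + u‖ ^ α + ε / 4 * 2 := by
        nlinarith [Real.rpow_nonneg (norm_nonneg (1 + u)) α]
    _ ≤ β⁻¹ + ε / 4 * 2 := by
        gcongr; exact norm_one_add_mul_cpow_neg_mul_rpow_le hu hβ0 hβ1 hα0 hα1
    _ = 1 + ε := by simp only [β, inv_inv]; ring

theorem eventually_exists_monic_norm_eval_mul_rpow_le {α : ℝ} (hα0 : 0 ≤ α) (hα1 : α ≤ 1)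
    {ε : ℝ} (hε : 0 < ε) :
    ∀ᶠ q in atTop, ∃ Q : ℂ[X], Q.Monic ∧ Q.natDegree = q ∧
      ∀ w : ℂ, ‖w‖ = 1 → ‖Q.eval w‖ * ‖1 + w‖ ^ α ≤ 1 + ε := by
  obtain ⟨S, hS0, hS⟩ := exists_polynomial_eval_zero_eq_one_norm_mul_rpow_le hα0 hα1 hε
  filter_upwards [eventually_ge_atTop S.natDegree] with q hq
  have hcoeff : (S.reflect q).coeff q = 1 := by
    rw [coeff_reflect, revAt_le le_rfl, Nat.sub_self, coeff_zero_eq_eval_zero, hS0]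
  have hdeg : (S.reflect q).natDegree ≤ q := natDegree_reflect_le.trans (max_le le_rfl hq)
  refine ⟨S.reflect q, monic_of_natDegree_le_of_coeff_eq_one q hdeg hcoeff,
    natDegree_eq_of_le_of_coeff_ne_zero hdeg (by rw [hcoeff]; exact one_ne_zero), fun w hw => ?_⟩
  have hw0 : w ≠ 0 := norm_ne_zero_iff.mp (by rw [hw]; exact one_ne_zero)
  have hinv : ‖1 + w⁻¹‖ = ‖1 + w‖ := by
    rw [show 1 + w⁻¹ = w⁻¹ * (1 + w) by field_simp; ring, norm_mul, norm_inv, hw, inv_one,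
      one_mul]
  rw [norm_eval_reflect hq hw, ← hinv]
  exact hS _ (by rw [norm_inv, hw, inv_one])

theorem eventually_exists_monic_lemniscate_norm_eval_le {m : ℕ} (hm : m ≠ 0) {ε : ℝ}
    (hε : 0 < ε) :
    ∀ᶠ n in atTop, ∃ P : ℂ[X], P.Monic ∧ P.natDegree = n ∧
      ∀ z : ℂ, ‖z ^ m - 1‖ = 1 → ‖P.eval z‖ ≤ 1 + ε := by
  have hQ : ∀ᶠ q in atTop, ∀ r : Fin m, ∃ Q : ℂ[X], Q.Monic ∧ Q.natDegree = q ∧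
      ∀ w : ℂ, ‖w‖ = 1 → ‖Q.eval w‖ * ‖1 + w‖ ^ ((r : ℝ) / m) ≤ 1 + ε :=
    eventually_all.2 fun r => eventually_exists_monic_norm_eval_mul_rpow_le (by positivity)
      (div_le_one_of_le₀ (by exact_mod_cast r.2.le) (Nat.cast_nonneg m)) hε
  filter_upwards [(Nat.tendsto_div_const_atTop hm).eventually hQ] with n hn
  obtain ⟨Q, hQm, hQd, hQ⟩ := hn ⟨n % m, Nat.mod_lt n (Nat.pos_of_ne_zero hm)⟩
  have hcomp : (Q.comp (X ^ m - C 1)).Monic :=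
    hQm.comp (monic_X_pow_sub_C 1 hm) (by rwa [natDegree_X_pow_sub_C])
  refine ⟨X ^ (n % m) * Q.comp (X ^ m - C 1), (monic_X_pow _).mul hcomp, ?_, fun z hz => ?_⟩
  · rw [(monic_X_pow _).natDegree_mul hcomp, natDegree_X_pow, natDegree_comp,
      natDegree_X_pow_sub_C, hQd, Nat.mod_add_div' n m]
  · have hpow : ‖z‖ ^ (n % m) = ‖1 + (z ^ m - 1)‖ ^ ((n % m : ℕ) / m : ℝ) := by
      rw [add_sub_cancel, norm_pow, ← Real.rpow_natCast, ← Real.rpow_natCast,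
        ← Real.rpow_mul (norm_nonneg z), mul_div_cancel₀ _ (Nat.cast_ne_zero.2 hm)]
    simp only [eval_mul, eval_pow, eval_X, eval_comp, eval_sub, eval_C, norm_mul, norm_pow]
    rw [hpow, mul_comm]
    exact hQ _ hz

section LemniscateChebyshev

variable {m : ℕ}

noncomputable def lemniscateSupNorm (m : ℕ) (P : ℂ[X]) : ℝ :=
  sSup {c : ℝ | ∃ z : ℂ, ‖z ^ m - 1‖ = 1 ∧ c = ‖P.eval z‖}

noncomputable def lemniscateChebyshevNumber (m n : ℕ) : ℝ :=
  sInf {r : ℝ | ∃ P : ℂ[X], P.Monic ∧ P.natDegree = n ∧ r = lemniscateSupNorm m P}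

theorem isCompact_lemniscate (hm : m ≠ 0) : IsCompact {z : ℂ | ‖z ^ m - 1‖ = 1} := by
  refine Metric.isCompact_of_isClosed_isBounded
    (isClosed_eq (f := fun z : ℂ => ‖z ^ m - 1‖) (by fun_prop) continuous_const)
    ((Metric.isBounded_closedBall (x := 0) (r := 2)).subset fun z (hz : ‖z ^ m - 1‖ = 1) => ?_)
  rw [mem_closedBall_zero_iff]
  by_contra! h
  have h1 : ‖z‖ ≤ ‖z‖ ^ m := le_self_pow₀ (by linarith) hm
  have h2 : ‖z ^ m‖ ≤ ‖z ^ m - 1‖ + 1 := by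
    simpa using norm_le_norm_sub_add (z ^ m) 1
  rw [hz, norm_pow] at h2
  linarith

theorem norm_eval_le_lemniscateSupNorm (hm : m ≠ 0) (P : ℂ[X]) {z : ℂ} (hz : ‖z ^ m - 1‖ = 1) :
    ‖P.eval z‖ ≤ lemniscateSupNorm m P := by
  refine le_csSup (((isCompact_lemniscate hm).image P.continuous.norm).bddAbove.mono ?_)
    ⟨z, hz, rfl⟩
  rintro _ ⟨w, hw, rfl⟩
  exact ⟨w, hw, rfl⟩

theorem lemniscateSupNorm_le (hm : m ≠ 0) {P : ℂ[X]} {B : ℝ}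
    (h : ∀ z : ℂ, ‖z ^ m - 1‖ = 1 → ‖P.eval z‖ ≤ B) : lemniscateSupNorm m P ≤ B := by
  refine csSup_le ⟨_, 0, by simp [zero_pow hm], rfl⟩ ?_
  rintro _ ⟨z, hz, rfl⟩
  exact h z hz

theorem one_le_lemniscateSupNorm (hm : m ≠ 0) {P : ℂ[X]} (hP : P.Monic) :
    1 ≤ lemniscateSupNorm m P :=
  one_le_of_forall_lemniscate_norm_eval_le hm hP fun _ hz =>
    norm_eval_le_lemniscateSupNorm hm P hz

theorem one_le_lemniscateChebyshevNumber (hm : m ≠ 0) (n : ℕ) :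
    1 ≤ lemniscateChebyshevNumber m n := by
  refine le_csInf ⟨_, X ^ n, monic_X_pow n, natDegree_X_pow n, rfl⟩ ?_
  rintro _ ⟨P, hP, -, rfl⟩
  exact one_le_lemniscateSupNorm hm hP

theorem eventually_lemniscateChebyshevNumber_le (hm : m ≠ 0) {ε : ℝ} (hε : 0 < ε) :
    ∀ᶠ n in atTop, lemniscateChebyshevNumber m n ≤ 1 + ε := by
  filter_upwards [eventually_exists_monic_lemniscate_norm_eval_le hm hε] with n hn
  obtain ⟨P, hP, hPn, hPε⟩ := hn
  have hbdd : BddBelow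
      {r : ℝ | ∃ Q : ℂ[X], Q.Monic ∧ Q.natDegree = n ∧ r = lemniscateSupNorm m Q} := by
    refine ⟨1, ?_⟩
    rintro _ ⟨Q, hQ, -, rfl⟩
    exact one_le_lemniscateSupNorm hm hQ
  exact (csInf_le hbdd ⟨P, hP, hPn, rfl⟩).trans (lemniscateSupNorm_le hm hPε)

end LemniscateChebyshev

theorem lemniscate_chebyshev_norms_tendsto_one (m : ℕ) (hm : 1 ≤ m) :
    Filter.Tendsto
      (fun n : ℕ => sInf {r : ℝ | ∃ P : Polynomial ℂ, P.Monic ∧ P.natDegree = n ∧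
        r = sSup {c : ℝ | ∃ z : ℂ, ‖z ^ m - 1‖ = 1 ∧ c = ‖P.eval z‖}})
      Filter.atTop (nhds 1) := by
  have hm0 : m ≠ 0 := Nat.one_le_iff_ne_zero.mp hm
  change Tendsto (lemniscateChebyshevNumber m) atTop (𝓝 1)
  refine tendsto_order.2 ⟨fun a ha => Eventually.of_forall fun n =>
    ha.trans_le (one_le_lemniscateChebyshevNumber hm0 n), fun a ha => ?_⟩
  filter_upwards [eventually_lemniscateChebyshevNumber_le hm0 (half_pos (sub_pos.2 ha))]
    with n hn
  linarith
end

section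
/- Let m and n be positive integers and E_m = {z ∈ ℂ : |z^m − 1| = 1}. Then every monic complex polynomial P of degree n·m satisfies sup_{z ∈ E_m} |P(z)| ≥ 1, and the monic polynomial P(z) = (z^m − 1)^n attains this bound with sup_{z ∈ E_m} |(z^m−1)^n| = 1; hence (z^m−1)^n is a Chebyshev polynomial of degree nm for E_m. -/
open Polynomial Finset

lemma root_sum (M : ℕ) {ζ : ℂ} (hζ : IsPrimitiveRoot ζ M) (d : ℕ) :
    ∑ j ∈ Finset.range M, ζ ^ (j * d) = if M ∣ d then (M : ℂ) else 0 := by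
  have h1 : ∀ j, ζ ^ (j * d) = (ζ ^ d) ^ j := fun j => by rw [← pow_mul, Nat.mul_comm]
  simp_rw [h1]
  by_cases h : M ∣ d
  · rw [if_pos h]
    have : ζ ^ d = 1 := (hζ.pow_eq_one_iff_dvd d).2 h
    simp [this]
  · rw [if_neg h]
    have hne : ζ ^ d ≠ 1 := fun hh => h ((hζ.pow_eq_one_iff_dvd d).1 hh)
    rw [geom_sum_eq hne]
    have : (ζ ^ d) ^ M = 1 := by
      rw [← pow_mul, mul_comm, pow_mul, hζ.pow_eq_one, one_pow]
    rw [this, sub_self, zero_div]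

lemma outer_sum (K : ℕ) (hK : K ≠ 0) {ζ : ℂ} (hζ : IsPrimitiveRoot ζ K) (b : ℕ → ℂ) :
    ∑ k ∈ Finset.range K, ζ ^ k * ∑ i ∈ Finset.range K, b i * (1 + ζ ^ k) ^ i
      = K * b (K - 1) := by
  have key : ∀ i ∈ Finset.range K,
      ∑ k ∈ Finset.range K, ζ ^ k * (1 + ζ ^ k) ^ i
        = if i = K - 1 then (K : ℂ) else 0 := by
    intro i hi
    rw [Finset.mem_range] at hi
    have expand : ∀ k, ζ ^ k * (1 + ζ ^ k) ^ i
        = ∑ l ∈ Finset.range (i + 1), (i.choose l : ℂ) * ζ ^ (k * (l + 1)) := by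
      intro k
      rw [add_comm (1 : ℂ), add_pow, Finset.mul_sum]
      refine Finset.sum_congr rfl fun l hl => ?_
      rw [one_pow, mul_one, show k * (l + 1) = k + k * l by ring, pow_add, pow_mul]
      ring
    simp_rw [expand]
    rw [Finset.sum_comm]
    have : ∀ l ∈ Finset.range (i + 1),
        ∑ k ∈ Finset.range K, (i.choose l : ℂ) * ζ ^ (k * (l + 1))
          = if l = K - 1 then (K : ℂ) else 0 := by
      intro l hl
      rw [Finset.mem_range, Nat.lt_succ_iff] at hl
      rw [← Finset.mul_sum, root_sum K hζ (l + 1)]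
      by_cases hdvd : K ∣ l + 1
      · have hlK : l + 1 = K := Nat.le_antisymm (by omega) (Nat.le_of_dvd (by omega) hdvd)
        have hl' : l = K - 1 := by omega
        have hiK : i = K - 1 := by omega
        rw [if_pos hdvd, if_pos hl', hl', hiK, Nat.choose_self]
        simp
      · have hl' : l ≠ K - 1 := by
          intro h; apply hdvd; rw [h]
          have : K - 1 + 1 = K := by omega
          rw [this]
        rw [if_neg hdvd, if_neg hl', mul_zero]
    rw [Finset.sum_congr rfl this, Finset.sum_ite_eq' (Finset.range (i + 1)) (K - 1)]
    by_cases hiK : i = K - 1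
    · rw [if_pos (by rw [Finset.mem_range]; omega), if_pos hiK]
    · rw [if_neg (by rw [Finset.mem_range]; omega), if_neg hiK]
  have swap : ∑ k ∈ Finset.range K, ζ ^ k * ∑ i ∈ Finset.range K, b i * (1 + ζ ^ k) ^ i
      = ∑ i ∈ Finset.range K, b i * ∑ k ∈ Finset.range K, ζ ^ k * (1 + ζ ^ k) ^ i := by
    simp_rw [Finset.mul_sum]
    rw [Finset.sum_comm]
    refine Finset.sum_congr rfl fun i _ => Finset.sum_congr rfl fun k _ => by ring
  rw [swap, Finset.sum_congr rfl fun i hi => by rw [key i hi]]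
  simp_rw [mul_ite, mul_zero]
  rw [Finset.sum_ite_eq' (Finset.range K) (K - 1)]
  rw [if_pos (by rw [Finset.mem_range]; omega), mul_comm]

theorem lemniscate_chebyshev_degree_nm (m n : ℕ) (hm : 1 ≤ m) (hn : 1 ≤ n) :
    (∀ P : Polynomial ℂ, P.Monic → P.natDegree = n * m →
      1 ≤ sSup {c : ℝ | ∃ z : ℂ, ‖z ^ m - 1‖ = 1 ∧ c = ‖P.eval z‖}) ∧
    ((Polynomial.X ^ m - 1 : Polynomial ℂ) ^ n).Monic ∧
    ((Polynomial.X ^ m - 1 : Polynomial ℂ) ^ n).natDegree = n * m ∧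
    sSup {c : ℝ | ∃ z : ℂ, ‖z ^ m - 1‖ = 1 ∧
      c = ‖(((Polynomial.X ^ m - 1 : Polynomial ℂ)) ^ n).eval z‖} = 1 := by
  have hm0 : m ≠ 0 := by omega
  have hn0 : n ≠ 0 := by omega
  have hXm : (Polynomial.X ^ m - 1 : Polynomial ℂ) = Polynomial.X ^ m - Polynomial.C 1 := by
    rw [map_one]
  have hmonic : ((Polynomial.X ^ m - 1 : Polynomial ℂ) ^ n).Monic := by
    rw [hXm]; exact (monic_X_pow_sub_C (1 : ℂ) hm0).pow n
  have hdegP : ((Polynomial.X ^ m - 1 : Polynomial ℂ) ^ n).natDegree = n * m := by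
    rw [hXm, natDegree_pow, natDegree_X_pow_sub_C]
  refine ⟨?_, hmonic, hdegP, ?_⟩
  · intro P hP hdeg
    set S : Set ℝ := {c : ℝ | ∃ z : ℂ, ‖z ^ m - 1‖ = 1 ∧ c = ‖P.eval z‖} with hS
    -- boundedness of the sup set
    have hEclosed : IsClosed {z : ℂ | ‖z ^ m - 1‖ = 1} :=
      isClosed_eq (((continuous_pow m).sub continuous_const).norm) continuous_const
    have hEbdd : Bornology.IsBounded {z : ℂ | ‖z ^ m - 1‖ = 1} := by
      rw [isBounded_iff_forall_norm_le]
      refine ⟨2, fun z hz => ?_⟩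
      have h1 : ‖z ^ m‖ ≤ 2 := by
        calc ‖z ^ m‖ = ‖(z ^ m - 1) + 1‖ := by ring_nf
          _ ≤ ‖z ^ m - 1‖ + ‖(1 : ℂ)‖ := norm_add_le _ _
          _ ≤ 2 := by rw [hz, norm_one]; norm_num
      by_contra hc
      push_neg at hc
      have h2 : ‖z‖ ≤ ‖z‖ ^ m := le_self_pow₀ (by linarith) hm0
      rw [← norm_pow] at h2
      linarith
    have hEc : IsCompact {z : ℂ | ‖z ^ m - 1‖ = 1} :=
      Metric.isCompact_of_isClosed_isBounded hEclosed hEbdd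
    have hSimg : S = (fun z : ℂ => ‖P.eval z‖) '' {z : ℂ | ‖z ^ m - 1‖ = 1} := by
      ext c
      constructor
      · rintro ⟨z, hz, rfl⟩; exact ⟨z, hz, rfl⟩
      · rintro ⟨z, hz, rfl⟩; exact ⟨z, hz, rfl⟩
    have hbdd : BddAbove S := by
      rw [hSimg]
      exact (hEc.image (Polynomial.continuous P).norm).bddAbove
    -- roots of unity setup
    obtain ⟨ζ, hζ⟩ : ∃ ζ : ℂ, IsPrimitiveRoot ζ (n + 1) :=
      ⟨_, Complex.isPrimitiveRoot_exp (n + 1) (by omega)⟩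
    obtain ⟨μ, hμ⟩ : ∃ μ : ℂ, IsPrimitiveRoot μ m :=
      ⟨_, Complex.isPrimitiveRoot_exp m hm0⟩
    have hρ : ∀ k : ℕ, ∃ ρ : ℂ, ρ ^ m = 1 + ζ ^ k := fun k =>
      IsAlgClosed.exists_pow_nat_eq _ (by omega)
    choose ρ hρ using hρ
    have hζnorm : ∀ k : ℕ, ‖ζ ^ k‖ = 1 := by
      intro k
      refine Complex.norm_eq_one_of_pow_eq_one (n := n + 1) ?_ (by omega)
      rw [← pow_mul, mul_comm k (n + 1), pow_mul, hζ.pow_eq_one, one_pow]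
    have hmem : ∀ k j : ℕ, ‖(ρ k * μ ^ j) ^ m - 1‖ = 1 := by
      intro k j
      have : (ρ k * μ ^ j) ^ m = 1 + ζ ^ k := by
        rw [mul_pow, ← pow_mul, mul_comm j m, pow_mul, hμ.pow_eq_one, one_pow, mul_one, hρ]
      rw [this, add_sub_cancel_left, hζnorm]
    -- each value is ≤ sSup S
    have hle : ∀ k j : ℕ, ‖P.eval (ρ k * μ ^ j)‖ ≤ sSup S :=
      fun k j => le_csSup hbdd ⟨ρ k * μ ^ j, hmem k j, rfl⟩
    -- the inner sum identity
    have inner : ∀ k : ℕ, ∑ j ∈ Finset.range m, P.eval (ρ k * μ ^ j)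
        = m * ∑ i ∈ Finset.range (n + 1), P.coeff (i * m) * (1 + ζ ^ k) ^ i := by
      intro k
      have hdeg' : P.natDegree < n * m + 1 := by omega
      have e1 : ∀ j : ℕ, P.eval (ρ k * μ ^ j)
          = ∑ s ∈ Finset.range (n * m + 1), P.coeff s * ρ k ^ s * μ ^ (j * s) := by
        intro j
        rw [eval_eq_sum_range' hdeg']
        refine Finset.sum_congr rfl fun s _ => ?_
        rw [mul_pow, ← pow_mul]
        ring
      simp_rw [e1]
      rw [Finset.sum_comm]
      have e2 : ∀ s ∈ Finset.range (n * m + 1),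
          ∑ j ∈ Finset.range m, P.coeff s * ρ k ^ s * μ ^ (j * s)
            = if m ∣ s then P.coeff s * ρ k ^ s * m else 0 := by
        intro s _
        rw [← Finset.mul_sum, root_sum m hμ s]
        by_cases h : m ∣ s
        · rw [if_pos h, if_pos h]
        · rw [if_neg h, if_neg h, mul_zero]
      rw [Finset.sum_congr rfl e2, ← Finset.sum_filter]
      have e3 : (Finset.range (n * m + 1)).filter (fun s => m ∣ s)
          = (Finset.range (n + 1)).image (fun i => i * m) := by
        ext s
        simp only [Finset.mem_filter, Finset.mem_range, Finset.mem_image, Nat.lt_succ_iff]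
        constructor
        · rintro ⟨hle', c, rfl⟩
          have h2 : m * c ≤ m * n := by rw [mul_comm n m] at hle'; exact hle'
          exact ⟨c, Nat.le_of_mul_le_mul_left h2 (by omega), by ring⟩
        · rintro ⟨i, hi, rfl⟩
          exact ⟨Nat.mul_le_mul hi (le_refl m), i, by ring⟩
      rw [e3, Finset.sum_image (fun i _ j _ h => Nat.eq_of_mul_eq_mul_right (by omega) h)]
      rw [Finset.mul_sum]
      refine Finset.sum_congr rfl fun i _ => ?_
      rw [mul_comm i m, pow_mul, hρ k]
      ring
    -- total sum
    have total : ∑ k ∈ Finset.range (n + 1), ζ ^ k * ∑ j ∈ Finset.range m, P.eval (ρ k * μ ^ j)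
        = (m : ℂ) * (n + 1) := by
      simp_rw [inner]
      have : ∑ k ∈ Finset.range (n + 1),
          ζ ^ k * ((m : ℂ) * ∑ i ∈ Finset.range (n + 1), P.coeff (i * m) * (1 + ζ ^ k) ^ i)
          = (m : ℂ) * ∑ k ∈ Finset.range (n + 1),
              ζ ^ k * ∑ i ∈ Finset.range (n + 1), P.coeff (i * m) * (1 + ζ ^ k) ^ i := by
        rw [Finset.mul_sum]; exact Finset.sum_congr rfl fun k _ => by ring
      rw [this, outer_sum (n + 1) (by omega) hζ]
      have hcoeff : P.coeff ((n + 1 - 1) * m) = 1 := by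
        have h1 : n + 1 - 1 = n := rfl
        rw [h1, ← hdeg]; exact hP.coeff_natDegree
      rw [hcoeff, mul_one]
      push_cast; ring
    -- norm estimate
    have hnorm_bound : (m : ℝ) * (n + 1)
        ≤ (n + 1) * (m * sSup S) := by
      have h0 : ∀ k j : ℕ, (0:ℝ) ≤ ‖P.eval (ρ k * μ ^ j)‖ := fun _ _ => norm_nonneg _
      calc (m : ℝ) * (n + 1) = ‖((m : ℂ) * (n + 1))‖ := by
            rw [show ((m:ℂ) * ((n:ℂ) + 1)) = ((m * (n + 1) : ℕ) : ℂ) by push_cast; ring,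
              Complex.norm_natCast]
            push_cast; ring
        _ = ‖∑ k ∈ Finset.range (n + 1), ζ ^ k * ∑ j ∈ Finset.range m, P.eval (ρ k * μ ^ j)‖ := by
            rw [total]
        _ ≤ ∑ k ∈ Finset.range (n + 1), ‖ζ ^ k * ∑ j ∈ Finset.range m, P.eval (ρ k * μ ^ j)‖ :=
            norm_sum_le _ _
        _ ≤ ∑ k ∈ Finset.range (n + 1), (m * sSup S) := by
            refine Finset.sum_le_sum fun k _ => ?_
            rw [norm_mul, hζnorm, one_mul]
            calc ‖∑ j ∈ Finset.range m, P.eval (ρ k * μ ^ j)‖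
                ≤ ∑ j ∈ Finset.range m, ‖P.eval (ρ k * μ ^ j)‖ := norm_sum_le _ _
              _ ≤ ∑ j ∈ Finset.range m, sSup S := Finset.sum_le_sum fun j _ => hle k j
              _ = m * sSup S := by rw [Finset.sum_const, Finset.card_range, nsmul_eq_mul]
        _ = (n + 1) * (m * sSup S) := by
            rw [Finset.sum_const, Finset.card_range, nsmul_eq_mul]
            push_cast; ring
    have hmpos : (0:ℝ) < m := by positivity
    have hnpos : (0:ℝ) < (n:ℝ) + 1 := by positivity
    nlinarith [hnorm_bound, mul_pos hmpos hnpos]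
  · -- the sup for (X^m-1)^n is 1
    have hset : {c : ℝ | ∃ z : ℂ, ‖z ^ m - 1‖ = 1 ∧
        c = ‖(((Polynomial.X ^ m - 1 : Polynomial ℂ)) ^ n).eval z‖} = {1} := by
      ext c
      simp only [Set.mem_setOf_eq, Set.mem_singleton_iff]
      constructor
      · rintro ⟨z, hz, rfl⟩
        rw [eval_pow, eval_sub, eval_pow, eval_X, eval_one, norm_pow, hz, one_pow]
      · rintro rfl
        refine ⟨0, ?_, ?_⟩
        · rw [zero_pow hm0, zero_sub, norm_neg, norm_one]
        · rw [eval_pow, eval_sub, eval_pow, eval_X, eval_one, norm_pow, zero_pow hm0,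
            zero_sub, norm_neg, norm_one, one_pow]
    rw [hset, csSup_singleton]
end

section
/- Fix a positive integer m, set ξ = cos(π/(2(m+1))), and let T_{m+1} denote the monic Chebyshev polynomial of the first kind of degree m+1, characterized by T_{m+1}(cos θ) = 2^{−m}·cos((m+1)θ). Let Q be the unique monic real polynomial of degree m minimizing sup_{x ∈ [−1,1]} (1−x)·|Q(x)| over all monic real polynomials of degree m. Then for all x: (x−1)·Q(x) = (2/(ξ+1))^{m+1} · T_{m+1}( (x(ξ+1) + (ξ−1))/2 ). -/
/-!
Let `ξ = cos (π / (2 (m + 1)))`, the largest zero of `T = T_{m+1}`. Pulling `T` back along the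
increasing affine map of `[-1, 1]` onto `[-1, ξ]` and rescaling it to be monic gives a polynomial
`R` with `R 1 = 0`, hence `R = (X - 1) P` with `P` monic of degree `m`, and
`(1 - x) |P x| = |R x| ≤ E` on `[-1, 1]`. Moreover `R` takes the values `±E`, with alternating
signs, at the `m + 1` preimages `x_0 > ⋯ > x_m` of the extremal points `cos (jπ / (m + 1))`,
`1 ≤ j ≤ m + 1`, all of which lie in `[-1, 1)`. A minimiser `Q` also has weighted norm `≤ E`, so
`(-1)^j (P - Q)(x_j) ≥ 0`. As `P - Q` has degree `< m`, its `m`-th divided difference at the `x_j`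
vanishes; it is a sum of the nonnegative terms `(P - Q)(x_j) / ∏_{i ≠ j} (x_j - x_i)`, so `P - Q`
vanishes at `m + 1` points, and `P = Q`.
-/

open Polynomial Finset Real

section Alternation

variable {K : Type*} [Field K] [LinearOrder K] [IsStrictOrderedRing K]

lemma neg_one_pow_mul_prod_erase_sub_pos {n i : ℕ} {x : ℕ → K} (hx : StrictAntiOn x (Set.Iic n))
    (hi : i ≤ n) : 0 < (-1) ^ i * ∏ j ∈ (Iic n).erase i, (x i - x j) := by
  have hsplit : (Iic n).erase i = Iio i ∪ Ioc i n := by ext j; simp; omega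
  have hdisj : Disjoint (Iio i) (Ioc i n) :=
    disjoint_left.2 fun j hj hj' => by simp at hj hj'; omega
  have hbelow : 0 < ∏ j ∈ Iio i, -(x i - x j) := prod_pos fun j hj => by
    simp only [mem_Iio] at hj
    simpa using hx (Set.mem_Iic.2 (hj.le.trans hi)) (Set.mem_Iic.2 hi) hj
  have habove : 0 < ∏ j ∈ Ioc i n, (x i - x j) := prod_pos fun j hj => by
    simp only [mem_Ioc] at hj
    exact sub_pos.2 (hx (Set.mem_Iic.2 hi) (Set.mem_Iic.2 hj.2) hj.1)
  rw [prod_neg, Nat.card_Iio] at hbelow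
  rw [hsplit, prod_union hdisj, ← mul_assoc]
  exact mul_pos hbelow habove

theorem Polynomial.eq_zero_of_degree_lt_of_alternating {n : ℕ} {D : K[X]} {x : ℕ → K}
    (hx : StrictAntiOn x (Set.Iic n)) (hD : D.degree < n)
    (hsign : ∀ i ≤ n, 0 ≤ (-1) ^ i * D.eval (x i)) : D = 0 := by
  have hinj : Set.InjOn x ↑(Iic n) := by rw [coe_Iic]; exact hx.injOn
  have hcard : (#(Iic n) : WithBot ℕ) = n + 1 := by rw [Nat.card_Iic]; rfl
  have hD' : D.degree < #(Iic n) := hD.trans (by rw [hcard]; exact_mod_cast Nat.lt_succ_self n)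
  have hsum : ∑ i ∈ Iic n, D.eval (x i) / ∏ j ∈ (Iic n).erase i, (x i - x j) = 0 := by
    rw [← Lagrange.coeff_eq_sum hinj hD', Nat.card_Iic, Nat.add_sub_cancel]
    exact coeff_eq_zero_of_degree_lt hD
  have hterm : ∀ i ∈ Iic n, 0 ≤ D.eval (x i) / ∏ j ∈ (Iic n).erase i, (x i - x j) := by
    intro i hi
    rw [← mul_div_mul_left _ _ (pow_ne_zero i (neg_ne_zero.2 (one_ne_zero (α := K))))]
    exact div_nonneg (hsign i (mem_Iic.1 hi))
      (neg_one_pow_mul_prod_erase_sub_pos hx (mem_Iic.1 hi)).le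
  refine eq_zero_of_degree_lt_of_eval_index_eq_zero _ hinj hD' fun i hi => ?_
  have hprod := right_ne_zero_of_mul (neg_one_pow_mul_prod_erase_sub_pos hx (mem_Iic.1 hi)).ne'
  simpa [hprod] using (sum_eq_zero_iff_of_nonneg hterm).1 hsum i hi

theorem Polynomial.eq_of_monic_of_equioscillation {m : ℕ} {P Q : K[X]} (hP : P.Monic)
    (hQ : Q.Monic) (hPdeg : P.natDegree = m) (hQdeg : Q.natDegree = m) {w : K → K} {x : ℕ → K}
    {E : K} (hx : StrictAntiOn x (Set.Iic m)) (hw : ∀ j ≤ m, 0 < w (x j))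
    (hPx : ∀ j ≤ m, w (x j) * P.eval (x j) = (-1) ^ j * E)
    (hQx : ∀ j ≤ m, w (x j) * |Q.eval (x j)| ≤ E) : Q = P := by
  have hdeg : (P - Q).degree < m := by
    have := degree_sub_lt_left (by rw [degree_eq_natDegree hP.ne_zero,
      degree_eq_natDegree hQ.ne_zero, hPdeg, hQdeg]) hP.ne_zero
      (hP.leadingCoeff.trans hQ.leadingCoeff.symm)
    rwa [degree_eq_natDegree hP.ne_zero, hPdeg] at this
  refine (sub_eq_zero.1 (eq_zero_of_degree_lt_of_alternating hx hdeg fun j hj => ?_)).symm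
  have hQj : (-1) ^ j * (w (x j) * Q.eval (x j)) ≤ E := by
    refine (le_abs_self _).trans ?_
    rw [abs_mul, abs_neg_one_pow, one_mul, abs_mul, abs_of_pos (hw j hj)]
    exact hQx j hj
  have hsq : ((-1 : K) ^ j) ^ 2 = 1 := by rw [← pow_mul, mul_comm, pow_mul, neg_one_sq, one_pow]
  have hweighted : w (x j) * ((-1) ^ j * (P - Q).eval (x j))
      = E - (-1) ^ j * (w (x j) * Q.eval (x j)) := by
    rw [eval_sub]; linear_combination (-1) ^ j * hPx j hj + E * hsq
  refine nonneg_of_mul_nonneg_right ?_ (hw j hj)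
  rw [hweighted]
  exact sub_nonneg.2 hQj

end Alternation

lemma Polynomial.Monic.exists_monic_mul_X_sub_C_eq {R : Type*} [CommRing R] [Nontrivial R]
    {P : R[X]} (hP : P.Monic) {n : ℕ} (hdeg : P.natDegree = n + 1) {a : R} (ha : P.IsRoot a) :
    ∃ Q : R[X], Q.Monic ∧ Q.natDegree = n ∧ (X - C a) * Q = P := by
  have hfac := mul_divByMonic_eq_iff_isRoot.2 ha
  refine ⟨P /ₘ (X - C a), (monic_X_sub_C a).of_mul_monic_left (hfac.symm ▸ hP), ?_, hfac⟩
  rw [natDegree_divByMonic _ (monic_X_sub_C a), hdeg, natDegree_X_sub_C, Nat.add_sub_cancel]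

section WeightedSupNorm

-- Stated in the set-builder form of the hypothesis `hQmin`, which then unfolds to it.
noncomputable def weightedSupNorm (P : ℝ[X]) : ℝ :=
  sSup {t : ℝ | ∃ x ∈ Set.Icc (-1 : ℝ) 1, t = (1 - x) * |P.eval x|}

lemma bddAbove_weightedSupNorm_set (P : ℝ[X]) :
    BddAbove {t : ℝ | ∃ x ∈ Set.Icc (-1 : ℝ) 1, t = (1 - x) * |P.eval x|} := by
  have hcont : Continuous fun x => (1 - x) * |P.eval x| := by fun_prop
  obtain ⟨B, hB⟩ := isCompact_Icc.bddAbove_image hcont.continuousOn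
  exact ⟨B, by rintro _ ⟨x, hx, rfl⟩; exact hB ⟨x, hx, rfl⟩⟩

lemma mul_abs_eval_le_weightedSupNorm (P : ℝ[X]) {x : ℝ} (hx : x ∈ Set.Icc (-1 : ℝ) 1) :
    (1 - x) * |P.eval x| ≤ weightedSupNorm P :=
  le_csSup (bddAbove_weightedSupNorm_set P) ⟨x, hx, rfl⟩

lemma weightedSupNorm_nonneg (P : ℝ[X]) : 0 ≤ weightedSupNorm P := by
  simpa using mul_abs_eval_le_weightedSupNorm P (x := 1) (by norm_num)

lemma weightedSupNorm_le {P : ℝ[X]} {E : ℝ}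
    (h : ∀ x ∈ Set.Icc (-1 : ℝ) 1, (1 - x) * |P.eval x| ≤ E) : weightedSupNorm P ≤ E :=
  csSup_le ⟨_, 1, by norm_num, rfl⟩ (by rintro _ ⟨x, hx, rfl⟩; exact h x hx)

lemma weightedSupNorm_le_of_eq_sInf {m : ℕ} {Q : ℝ[X]}
    (hQ : weightedSupNorm Q =
      sInf {r : ℝ | ∃ Q' : ℝ[X], Q'.Monic ∧ Q'.natDegree = m ∧ r = weightedSupNorm Q'})
    {Q' : ℝ[X]} (hQ' : Q'.Monic) (hQ'deg : Q'.natDegree = m) :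
    weightedSupNorm Q ≤ weightedSupNorm Q' :=
  hQ ▸ csInf_le ⟨0, by rintro _ ⟨P, -, -, rfl⟩; exact weightedSupNorm_nonneg P⟩
    ⟨Q', hQ', hQ'deg, rfl⟩

theorem mul_X_sub_one_eq_of_equioscillation {m : ℕ} {Q R : ℝ[X]} {E : ℝ} {x : ℕ → ℝ}
    (hQ : Q.Monic) (hQdeg : Q.natDegree = m)
    (hQmin : ∀ Q' : ℝ[X], Q'.Monic → Q'.natDegree = m → weightedSupNorm Q ≤ weightedSupNorm Q')
    (hR : R.Monic) (hRdeg : R.natDegree = m + 1) (hR1 : R.IsRoot 1)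
    (hRE : ∀ y ∈ Set.Icc (-1 : ℝ) 1, |R.eval y| ≤ E) (hx : StrictAntiOn x (Set.Iic m))
    (hxI : ∀ j ≤ m, x j ∈ Set.Ico (-1 : ℝ) 1) (hRx : ∀ j ≤ m, R.eval (x j) = (-1) ^ (j + 1) * E) :
    (X - C 1) * Q = R := by
  obtain ⟨P, hP, hPdeg, rfl⟩ := hR.exists_monic_mul_X_sub_C_eq hRdeg hR1
  have hweight : ∀ y : ℝ, (1 - y) * P.eval y = -((X - C 1) * P).eval y := fun y => by
    simp only [eval_mul, eval_sub, eval_X, eval_C]; ring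
  have hPE : weightedSupNorm P ≤ E := weightedSupNorm_le fun y hy => by
    rw [← abs_of_nonneg (sub_nonneg.2 hy.2), ← abs_mul, hweight, abs_neg]
    exact hRE y hy
  have hQx : ∀ j ≤ m, (1 - x j) * |Q.eval (x j)| ≤ E := fun j hj =>
    (mul_abs_eval_le_weightedSupNorm Q (Set.Ico_subset_Icc_self (hxI j hj))).trans
      ((hQmin P hP hPdeg).trans hPE)
  rw [eq_of_monic_of_equioscillation hP hQ hPdeg hQdeg hx (w := fun y => 1 - y)
    (fun j hj => sub_pos.2 (hxI j hj).2)
    (fun j hj => by rw [hweight, hRx j hj, pow_succ]; ring) hQx]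

end WeightedSupNorm

section CosIdentity

variable {T : ℝ[X]} {a : ℝ} {n : ℕ}

lemma abs_eval_le_of_eval_cos (hT : ∀ θ, T.eval (cos θ) = a * cos (n * θ)) {y : ℝ}
    (hy : y ∈ Set.Icc (-1 : ℝ) 1) : |T.eval y| ≤ |a| := by
  rw [← cos_arccos hy.1 hy.2, hT, abs_mul]
  exact mul_le_of_le_one_right (abs_nonneg a) (abs_cos_le_one _)

lemma eval_node_of_eval_cos (hT : ∀ θ, T.eval (cos θ) = a * cos (n * θ)) (hn : n ≠ 0) (i : ℕ) :
    T.eval (Chebyshev.node n i) = a * (-1) ^ i := by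
  rw [Chebyshev.node, hT, mul_div_assoc', mul_div_cancel_left₀ _ (Nat.cast_ne_zero.2 hn),
    cos_nat_mul_pi]

lemma eval_cos_pi_div_two_mul_of_eval_cos (hT : ∀ θ, T.eval (cos θ) = a * cos (n * θ))
    (hn : n ≠ 0) : T.eval (cos (π / (2 * n))) = 0 := by
  rw [hT, show (n : ℝ) * (π / (2 * n)) = π / 2 by field_simp, cos_pi_div_two, mul_zero]

end CosIdentity

lemma Polynomial.Chebyshev.node_lt_cos_pi_div_two_mul {n i : ℕ} (hi : i ≠ 0) (hin : i ≤ n) :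
    Chebyshev.node n i < cos (π / (2 * n)) := by
  have hn : (0 : ℝ) < n := by exact_mod_cast (Nat.pos_of_ne_zero hi).trans_le hin
  have hi' : (1 : ℝ) ≤ i := by exact_mod_cast Nat.one_le_iff_ne_zero.2 hi
  have hin' : (i : ℝ) ≤ n := by exact_mod_cast hin
  refine cos_lt_cos_of_nonneg_of_le_pi (by positivity) ?_ ?_
  · rw [div_le_iff₀ hn]; nlinarith [pi_pos]
  · rw [div_lt_div_iff₀ (by positivity) hn]; nlinarith [mul_pos pi_pos hn]

section Squeeze

variable {ξ : ℝ}

noncomputable def squeeze (ξ x : ℝ) : ℝ := (x * (ξ + 1) + (ξ - 1)) / 2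

noncomputable def unsqueeze (ξ y : ℝ) : ℝ := (2 * y - ξ + 1) / (ξ + 1)

lemma squeeze_unsqueeze (hξ : ξ + 1 ≠ 0) (y : ℝ) : squeeze ξ (unsqueeze ξ y) = y := by
  unfold squeeze unsqueeze; field_simp; ring

lemma squeeze_mem_Icc (hξ : ξ ∈ Set.Icc (-1 : ℝ) 1) {x : ℝ} (hx : x ∈ Set.Icc (-1 : ℝ) 1) :
    squeeze ξ x ∈ Set.Icc (-1 : ℝ) 1 := by
  obtain ⟨hξ₁, hξ₂⟩ := hξ
  obtain ⟨hx₁, hx₂⟩ := hx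
  unfold squeeze
  constructor <;> nlinarith

lemma strictMono_unsqueeze (hξ : -1 < ξ) : StrictMono (unsqueeze ξ) := fun y y' h =>
  div_lt_div_of_pos_right (by linarith) (by linarith)

lemma unsqueeze_mem_Ico (hξ : -1 < ξ) {y : ℝ} (hy : y ∈ Set.Ico (-1 : ℝ) ξ) :
    unsqueeze ξ y ∈ Set.Ico (-1 : ℝ) 1 := by
  have hξ' : 0 < ξ + 1 := by linarith
  obtain ⟨hy₁, hy₂⟩ := hy
  unfold unsqueeze
  constructor
  · rw [le_div_iff₀ hξ']; linarith
  · rw [div_lt_one hξ']; linarith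

noncomputable def monicCompSqueeze (T : ℝ[X]) (ξ : ℝ) : ℝ[X] :=
  C ((2 / (ξ + 1)) ^ T.natDegree) * T.comp (C ((ξ + 1) / 2) * X + C ((ξ - 1) / 2))

variable {T : ℝ[X]}

lemma eval_monicCompSqueeze (x : ℝ) :
    (monicCompSqueeze T ξ).eval x = (2 / (ξ + 1)) ^ T.natDegree * T.eval (squeeze ξ x) := by
  simp only [monicCompSqueeze, squeeze, eval_mul, eval_C, eval_comp, eval_add, eval_X]
  ring_nf

lemma natDegree_monicCompSqueeze (hξ : ξ + 1 ≠ 0) :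
    (monicCompSqueeze T ξ).natDegree = T.natDegree := by
  have hα : (ξ + 1) / 2 ≠ 0 := div_ne_zero hξ two_ne_zero
  rw [monicCompSqueeze, natDegree_C_mul (pow_ne_zero _ (div_ne_zero two_ne_zero hξ)),
    natDegree_comp, natDegree_linear hα, mul_one]

lemma monic_monicCompSqueeze (hT : T.Monic) (hξ : ξ + 1 ≠ 0) : (monicCompSqueeze T ξ).Monic := by
  have hα : (ξ + 1) / 2 ≠ 0 := div_ne_zero hξ two_ne_zero
  rw [Monic, monicCompSqueeze, leadingCoeff_mul, leadingCoeff_C,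
    leadingCoeff_comp (by rw [natDegree_linear hα]; exact one_ne_zero), hT.leadingCoeff,
    leadingCoeff_linear hα, one_mul, ← mul_pow, div_mul_div_cancel₀ hξ,
    div_self two_ne_zero, one_pow]

lemma isRoot_monicCompSqueeze_one (h : T.IsRoot ξ) : (monicCompSqueeze T ξ).IsRoot 1 := by
  rw [IsRoot.def, eval_monicCompSqueeze, show squeeze ξ 1 = ξ by simp [squeeze], h.eq_zero,
    mul_zero]

lemma abs_eval_monicCompSqueeze_le (hξ : ξ ∈ Set.Icc (-1 : ℝ) 1) {M : ℝ}
    (hT : ∀ y ∈ Set.Icc (-1 : ℝ) 1, |T.eval y| ≤ M) {x : ℝ} (hx : x ∈ Set.Icc (-1 : ℝ) 1) :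
    |(monicCompSqueeze T ξ).eval x| ≤ (2 / (ξ + 1)) ^ T.natDegree * M := by
  have hc : 0 ≤ (2 / (ξ + 1)) ^ T.natDegree :=
    pow_nonneg (div_nonneg two_pos.le (by linarith [hξ.1])) _
  rw [eval_monicCompSqueeze, abs_mul, abs_of_nonneg hc]
  exact mul_le_mul_of_nonneg_left (hT _ (squeeze_mem_Icc hξ hx)) hc

lemma eval_monicCompSqueeze_unsqueeze (hξ : ξ + 1 ≠ 0) (y : ℝ) :
    (monicCompSqueeze T ξ).eval (unsqueeze ξ y) = (2 / (ξ + 1)) ^ T.natDegree * T.eval y := by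
  rw [eval_monicCompSqueeze, squeeze_unsqueeze hξ]

end Squeeze

theorem interval_minimiser_is_translated_chebyshev_general (m : ℕ)
    (T : Polynomial ℝ) (hTm : T.Monic) (hTdeg : T.natDegree = m + 1)
    (hTcheb : ∀ θ : ℝ, T.eval (Real.cos θ) = (2 : ℝ) ^ (-(m : ℤ)) * Real.cos (((m : ℝ) + 1) * θ))
    (Q : Polynomial ℝ) (hQm : Q.Monic) (hQdeg : Q.natDegree = m)
    (hQmin : sSup {r : ℝ | ∃ x ∈ Set.Icc (-1 : ℝ) 1, r = (1 - x) * |Q.eval x|} =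
      sInf {r : ℝ | ∃ Q' : Polynomial ℝ, Q'.Monic ∧ Q'.natDegree = m ∧
        r = sSup {t : ℝ | ∃ x ∈ Set.Icc (-1 : ℝ) 1, t = (1 - x) * |Q'.eval x|}}) :
    ∀ x : ℝ, (x - 1) * Q.eval x =
      (2 / (Real.cos (Real.pi / (2 * ((m : ℝ) + 1))) + 1)) ^ (m + 1) *
        T.eval ((x * (Real.cos (Real.pi / (2 * ((m : ℝ) + 1))) + 1) +
          (Real.cos (Real.pi / (2 * ((m : ℝ) + 1))) - 1)) / 2) := by
  have hT : ∀ θ, T.eval (cos θ) = 2 ^ (-(m : ℤ)) * cos (((m + 1 : ℕ) : ℝ) * θ) := by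
    push_cast; exact hTcheb
  set ξ := cos (π / (2 * ((m : ℝ) + 1)))
  have hξ : ξ = cos (π / (2 * ((m + 1 : ℕ) : ℝ))) := by push_cast; rfl
  have hξlt : ∀ {i}, i ≠ 0 → i ≤ m + 1 → Chebyshev.node (m + 1) i < ξ := fun hi hin =>
    hξ ▸ Chebyshev.node_lt_cos_pi_div_two_mul hi hin
  have hξ₁ : -1 < ξ := Chebyshev.node_mem_Icc.1.trans_lt (hξlt m.succ_ne_zero le_rfl)
  have hξ₀ : ξ + 1 ≠ 0 := by linarith
  have hR := mul_X_sub_one_eq_of_equioscillation hQm hQdeg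
    (fun Q' hQ' hQ'deg => weightedSupNorm_le_of_eq_sInf hQmin hQ' hQ'deg)
    (monic_monicCompSqueeze hTm hξ₀) (by rw [natDegree_monicCompSqueeze hξ₀, hTdeg])
    (E := (2 / (ξ + 1)) ^ (m + 1) * 2 ^ (-(m : ℤ)))
    (x := fun j => unsqueeze ξ (Chebyshev.node (m + 1) (j + 1))) ?root ?bound ?anti ?mem ?values
  · intro y
    simpa [eval_monicCompSqueeze, hTdeg, squeeze] using congrArg (eval y) hR
  case root =>
    exact isRoot_monicCompSqueeze_one (hξ ▸ eval_cos_pi_div_two_mul_of_eval_cos hT m.succ_ne_zero)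
  case bound =>
    exact fun y hy => hTdeg ▸ abs_eval_monicCompSqueeze_le ⟨hξ₁.le, cos_le_one _⟩
      (fun z hz => (abs_eval_le_of_eval_cos hT hz).trans_eq (abs_of_pos (by positivity))) hy
  case anti =>
    exact (strictMono_unsqueeze hξ₁).comp_strictAntiOn fun i _ j hj hij =>
      Chebyshev.node_lt (Nat.succ_le_succ hj) (Nat.succ_lt_succ hij)
  case mem =>
    exact fun j hj => unsqueeze_mem_Ico hξ₁
      ⟨Chebyshev.node_mem_Icc.1, hξlt j.succ_ne_zero (Nat.succ_le_succ hj)⟩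
  case values =>
    intro j _
    rw [eval_monicCompSqueeze_unsqueeze hξ₀, eval_node_of_eval_cos hT m.succ_ne_zero, hTdeg]
    ring

theorem interval_minimiser_is_translated_chebyshev (m : ℕ) (hm : 1 ≤ m)
    (T : Polynomial ℝ) (hTm : T.Monic) (hTdeg : T.natDegree = m + 1)
    (hTcheb : ∀ θ : ℝ, T.eval (Real.cos θ) = (2 : ℝ) ^ (-(m : ℤ)) * Real.cos (((m : ℝ) + 1) * θ))
    (Q : Polynomial ℝ) (hQm : Q.Monic) (hQdeg : Q.natDegree = m)
    (hQmin : sSup {r : ℝ | ∃ x ∈ Set.Icc (-1 : ℝ) 1, r = (1 - x) * |Q.eval x|} =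
      sInf {r : ℝ | ∃ Q' : Polynomial ℝ, Q'.Monic ∧ Q'.natDegree = m ∧
        r = sSup {t : ℝ | ∃ x ∈ Set.Icc (-1 : ℝ) 1, t = (1 - x) * |Q'.eval x|}}) :
    ∀ x : ℝ, (x - 1) * Q.eval x =
      (2 / (Real.cos (Real.pi / (2 * ((m : ℝ) + 1))) + 1)) ^ (m + 1) *
        T.eval ((x * (Real.cos (Real.pi / (2 * ((m : ℝ) + 1))) + 1) +
          (Real.cos (Real.pi / (2 * ((m : ℝ) + 1))) - 1)) / 2) :=
  interval_minimiser_is_translated_chebyshev_general m T hTm hTdeg hTcheb Q hQm hQdeg hQmin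
end
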